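/- In the setting of the dense-step theorem — d a positive integer, Ω ⊆ Fin d, η ∈ (0,1], γ > 0, L > 0, β₀ ≥ 0, a probability space (S, μ), a random vector X : S → (Fin d → ℝ), an attribution map A : (Fin d → ℝ) → (Fin d → ℝ) with twice continuously differentiable coordinates, a measurable sign map s with values in {−1,1}^d, δ(x) := −ε·s(x), a set U ⊆ Ωᶜ with |U| ≥ η·(d − |Ω|) satisfying: for every i ∈ U, E[|⟨∇A_i(X), s(X)⟩|] ≥ γ; for every x and t ∈ [0,1] the second derivative of t ↦ A_i(x + t·δ(x)) is at most L·ε² in absolute value; E[|A_i(X)|] ≤ β₀; and integrability of all these random variables — let additionally A′ : Fin d → ℝ be a reference explanation with A′_i = 0 for every i ∉ Ω, and assume A_i(X + δ(X)) is integrable for every i ∈ Fin d. Then for every ε with 4β₀/γ ≤ ε ≤ γ/(2L), one has E[ Σ_{i ∈ Fin d} |A_i(X + δ(X)) − A′_i| ] ≥ (η·γ/2) · ε · (d − |Ω|). -/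

import Mathlib

/-!
Along the step δ = -ε•s(x), second-order Taylor expansion of `A_i` gives
`ε |∇A_i(x)·s(x)| ≤ |A_i(x + δ)| + |A_i(x)| + Lε²/2`. Taking expectations, the budget range makes
both `β₀` and `Lε²/2` at most `εγ/4`, so each `i ∈ U` carries expected attribution mass at least
`εγ/2` at the attacked input, where `A′` vanishes; summing over `U` gives the bound.
-/

open MeasureTheory Set

theorem abs_sub_sub_deriv_le_of_abs_deriv_deriv_le {f : ℝ → ℝ} {C : ℝ} (hf : ContDiff ℝ 2 f)
    (hC : ∀ t ∈ Icc (0 : ℝ) 1, |deriv (deriv f) t| ≤ C) :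
    |f 1 - f 0 - deriv f 0| ≤ C / 2 := by
  obtain ⟨t, ht, hrem⟩ :=
    taylor_mean_remainder_lagrange_iteratedDeriv (n := 1) zero_ne_one hf.contDiffOn
  rw [uIoo_of_le zero_le_one] at ht
  have hderiv : derivWithin f (uIcc 0 1) 0 = deriv f 0 :=
    (hf.differentiable two_ne_zero 0).derivWithin
      (uniqueDiffOn_uIcc zero_ne_one 0 (by simp))
  rw [taylorWithinEval_succ, taylor_within_zero_eval, iteratedDerivWithin_one, hderiv,
    iteratedDeriv_succ, iteratedDeriv_one] at hrem
  norm_num at hrem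
  rw [sub_sub, hrem, abs_div, abs_two]
  gcongr
  exact hC t (Ioo_subset_Icc_self ht)

section

variable {E : Type*} [NormedAddCommGroup E] [NormedSpace ℝ E] {g : E → ℝ} {C : ℝ}

theorem abs_sub_sub_fderiv_le_of_abs_deriv_deriv_le (hg : ContDiff ℝ 2 g) (x v : E)
    (hC : ∀ t ∈ Icc (0 : ℝ) 1, |deriv (deriv fun t : ℝ => g (x + t • v)) t| ≤ C) :
    |g (x + v) - g x - fderiv ℝ g x v| ≤ C / 2 := by
  have hline : HasDerivAt (fun t : ℝ => x + t • v) v 0 := by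
    simpa using ((hasDerivAt_id (0 : ℝ)).smul_const v).const_add x
  have hderiv : deriv (fun t : ℝ => g (x + t • v)) 0 = fderiv ℝ g x v :=
    ((hg.differentiable two_ne_zero x).hasFDerivAt.comp_hasDerivAt_of_eq 0 hline
      (by simp)).deriv
  rw [← hderiv]
  simpa using abs_sub_sub_deriv_le_of_abs_deriv_deriv_le
    (f := fun t : ℝ => g (x + t • v)) (hg.comp (by fun_prop)) hC

theorem abs_mul_integral_abs_fderiv_le {S : Type*} [MeasurableSpace S] {μ : Measure S}
    [IsProbabilityMeasure μ] (hg : ContDiff ℝ 2 g) {X : S → E} {w : E → E} {c : ℝ}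
    (hC : ∀ x, ∀ t ∈ Icc (0 : ℝ) 1, |deriv (deriv fun t : ℝ => g (x + t • (c • w x))) t| ≤ C)
    (hD : Integrable (fun ω => fderiv ℝ g (X ω) (w (X ω))) μ)
    (h₀ : Integrable (fun ω => g (X ω)) μ) (h₁ : Integrable (fun ω => g (X ω + c • w (X ω))) μ) :
    |c| * ∫ ω, |fderiv ℝ g (X ω) (w (X ω))| ∂μ
      ≤ ∫ ω, |g (X ω + c • w (X ω))| ∂μ + ∫ ω, |g (X ω)| ∂μ + C / 2 := by
  have hpoint : ∀ x, |c| * |fderiv ℝ g x (w x)| ≤ |g (x + c • w x)| + |g x| + C / 2 := by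
    intro x
    have htaylor := abs_sub_sub_fderiv_le_of_abs_deriv_deriv_le hg x (c • w x) (hC x)
    rw [map_smul, smul_eq_mul] at htaylor
    rw [← abs_mul]
    linarith [abs_sub_abs_le_abs_sub (c * fderiv ℝ g x (w x)) (g (x + c • w x) - g x),
      abs_sub_comm (c * fderiv ℝ g x (w x)) (g (x + c • w x) - g x),
      abs_sub (g (x + c • w x)) (g x)]
  have hsum : Integrable (fun ω => |g (X ω + c • w (X ω))| + |g (X ω)|) μ := h₁.abs.add h₀.abs
  calc |c| * ∫ ω, |fderiv ℝ g (X ω) (w (X ω))| ∂μ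
      = ∫ ω, |c| * |fderiv ℝ g (X ω) (w (X ω))| ∂μ := (integral_const_mul _ _).symm
    _ ≤ ∫ ω, (|g (X ω + c • w (X ω))| + |g (X ω)| + C / 2) ∂μ :=
      integral_mono (hD.abs.const_mul _) (hsum.add (integrable_const _))
        fun ω => hpoint (X ω)
    _ = _ := by
      rw [integral_add hsum (integrable_const _), integral_add h₁.abs h₀.abs,
        integral_const, probReal_univ, one_smul]

end

theorem card_mul_le_integral_sum_abs {ι S : Type*} [Fintype ι] [MeasurableSpace S]
    {μ : Measure S} {f : ι → S → ℝ} (hf : ∀ i, Integrable (f i) μ) {U : Finset ι} {c : ℝ}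
    (hc : ∀ i ∈ U, c ≤ ∫ ω, |f i ω| ∂μ) :
    U.card * c ≤ ∫ ω, ∑ i, |f i ω| ∂μ := by
  rw [integral_finsetSum _ fun i _ => (hf i).abs]
  calc U.card * c ≤ ∑ i ∈ U, ∫ ω, |f i ω| ∂μ := by
        simpa using Finset.card_nsmul_le_sum U _ c hc
    _ ≤ ∑ i, ∫ ω, |f i ω| ∂μ :=
        Finset.sum_le_sum_of_subset_of_nonneg (Finset.subset_univ U)
          fun i _ _ => integral_nonneg fun ω => abs_nonneg _

theorem dense_linf_step_mismatch_to_reference_general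
    (d : ℕ) (Ω : Finset (Fin d))
    (η γ L β₀ : ℝ) (hγ : 0 < γ) (hL : 0 < L)
    {S : Type*} [MeasurableSpace S] (μ : Measure S) [IsProbabilityMeasure μ]
    (X : S → (Fin d → ℝ))
    (A : (Fin d → ℝ) → (Fin d → ℝ))
    (hA : ∀ i : Fin d, ContDiff ℝ 2 (fun x => A x i))
    (s : (Fin d → ℝ) → (Fin d → ℝ))
    (ε : ℝ) (hε : 0 < ε)
    (U : Finset (Fin d)) (hUΩ : U ⊆ Ωᶜ)
    (hUcard : η * ((d : ℝ) - Ω.card) ≤ U.card)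
    -- (i) off-window directional sensitivity
    (hsens : ∀ i ∈ U,
      γ ≤ ∫ ω, |fderiv ℝ (fun x => A x i) (X ω) (s (X ω))| ∂μ)
    -- (ii) directional curvature bound along the dense step δ(x) = -ε • s x
    (hcurv : ∀ i ∈ U, ∀ x : Fin d → ℝ, ∀ t ∈ Set.Icc (0 : ℝ) 1,
      |deriv (deriv (fun t' : ℝ => A (x + t' • ((-ε) • s x)) i)) t| ≤ L * ε ^ 2)
    -- (iii) bounded clean background magnitude
    (hclean : ∀ i ∈ U, ∫ ω, |A (X ω) i| ∂μ ≤ β₀)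
    -- integrability of the random variables appearing above
    (hint1 : ∀ i ∈ U,
      Integrable (fun ω => fderiv ℝ (fun x => A x i) (X ω) (s (X ω))) μ)
    (hint2 : ∀ i ∈ U, Integrable (fun ω => A (X ω) i) μ)
    (hint3 : ∀ i : Fin d, Integrable (fun ω => A (X ω + (-ε) • s (X ω)) i) μ)
    -- reference explanation supported on Ω
    (A' : Fin d → ℝ) (hA' : ∀ i ∉ Ω, A' i = 0)
    -- admissible budget range
    (hεlo : 4 * β₀ / γ ≤ ε) (hεhi : ε ≤ γ / (2 * L)) :
    (η * γ / 2) * ε * ((d : ℝ) - Ω.card) ≤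
      ∫ ω, ∑ i : Fin d, |A (X ω + (-ε) • s (X ω)) i - A' i| ∂μ := by
  have hβ₀ε : 4 * β₀ ≤ ε * γ := by rwa [div_le_iff₀ hγ] at hεlo
  have hLε : 2 * L * ε ≤ γ := by rwa [le_div_iff₀' (by positivity)] at hεhi
  have hcoord : ∀ i ∈ U, ε * γ / 2 ≤ ∫ ω, |A (X ω + (-ε) • s (X ω)) i - A' i| ∂μ := by
    intro i hi
    have hstep := abs_mul_integral_abs_fderiv_le (hA i) (hcurv i hi) (hint1 i hi) (hint2 i hi)
      (hint3 i)
    rw [abs_neg, abs_of_pos hε] at hstep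
    simp only [hA' i (Finset.mem_compl.1 (hUΩ hi)), sub_zero]
    nlinarith [hsens i hi, hclean i hi]
  calc (η * γ / 2) * ε * ((d : ℝ) - Ω.card) = η * ((d : ℝ) - Ω.card) * (ε * γ / 2) := by ring
    _ ≤ U.card * (ε * γ / 2) := by gcongr
    _ ≤ _ := card_mul_le_integral_sum_abs (fun i => (hint3 i).sub (integrable_const _)) hcoord

/-- **Dense ℓ∞ steps cannot match a reference explanation supported on the target region.**
In the setting of the dense-step theorem, if `A′` is a reference explanation vanishing
outside `Ω`, then for every admissible budget `ε ∈ [4β₀/γ, γ/(2L)]` the expected ℓ¹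
mismatch between the adversarial attribution and `A′` is at least `(ηγ/2)·ε·(d − |Ω|)`. -/
theorem dense_linf_step_mismatch_to_reference
    (d : ℕ) (hd : 0 < d) (Ω : Finset (Fin d))
    (η γ L β₀ : ℝ) (hη : 0 < η) (hη1 : η ≤ 1) (hγ : 0 < γ) (hL : 0 < L) (hβ₀ : 0 ≤ β₀)
    {S : Type*} [MeasurableSpace S] (μ : Measure S) [IsProbabilityMeasure μ]
    (X : S → (Fin d → ℝ)) (hX : Measurable X)
    (A : (Fin d → ℝ) → (Fin d → ℝ))
    (hA : ∀ i : Fin d, ContDiff ℝ 2 (fun x => A x i))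
    (s : (Fin d → ℝ) → (Fin d → ℝ)) (hs : Measurable s)
    (hsign : ∀ x j, s x j = 1 ∨ s x j = -1)
    (ε : ℝ) (hε : 0 < ε)
    (U : Finset (Fin d)) (hUΩ : U ⊆ Ωᶜ)
    (hUcard : η * ((d : ℝ) - Ω.card) ≤ U.card)
    -- (i) off-window directional sensitivity
    (hsens : ∀ i ∈ U,
      γ ≤ ∫ ω, |fderiv ℝ (fun x => A x i) (X ω) (s (X ω))| ∂μ)
    -- (ii) directional curvature bound along the dense step δ(x) = -ε • s x
    (hcurv : ∀ i ∈ U, ∀ x : Fin d → ℝ, ∀ t ∈ Set.Icc (0 : ℝ) 1,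
      |deriv (deriv (fun t' : ℝ => A (x + t' • ((-ε) • s x)) i)) t| ≤ L * ε ^ 2)
    -- (iii) bounded clean background magnitude
    (hclean : ∀ i ∈ U, ∫ ω, |A (X ω) i| ∂μ ≤ β₀)
    -- integrability of the random variables appearing above
    (hint1 : ∀ i ∈ U,
      Integrable (fun ω => fderiv ℝ (fun x => A x i) (X ω) (s (X ω))) μ)
    (hint2 : ∀ i ∈ U, Integrable (fun ω => A (X ω) i) μ)
    (hint3 : ∀ i : Fin d, Integrable (fun ω => A (X ω + (-ε) • s (X ω)) i) μ)
    -- reference explanation supported on Ω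
    (A' : Fin d → ℝ) (hA' : ∀ i ∉ Ω, A' i = 0)
    -- admissible budget range
    (hεlo : 4 * β₀ / γ ≤ ε) (hεhi : ε ≤ γ / (2 * L)) :
    (η * γ / 2) * ε * ((d : ℝ) - Ω.card) ≤
      ∫ ω, ∑ i : Fin d, |A (X ω + (-ε) • s (X ω)) i - A' i| ∂μ :=
  dense_linf_step_mismatch_to_reference_general d Ω η γ L β₀ hγ hL μ X A hA s ε hε U hUΩ hUcard
    hsens hcurv hclean hint1 hint2 hint3 A' hA' hεlo hεhi
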